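/- arXiv:2108.08519 — 2 statements merged into one kernel-verified Lean document; each statement's English description precedes it below -/
import Mathlib

section
/- Let m ≥ 1, M ≥ 1, and fix constants C, C_α, C_{αβ} > 0 as below. Let b : ℝ → (0,∞) be a smooth positive function such that for every k ∈ ℕ there is C_k with |b^{(k)}(t)| ≤ C_k b(t) for all t ≥ 0. Let U ⊆ ℝ^m × ℝ^m be open and let φ : U → [0,∞) be smooth (in variables (x,ξ)) such that for all h ∈ (0,1] and (x,ξ) ∈ U: |∂_x^α φ| ≤ C_α M h for every multi-index α with |α| ≥ 1; |∂_x^α ∂_ξ^β φ| ≤ C_{αβ} M^{1/2} h^{1/2} for every α and every β with |β| = 1; and |∂_x^α ∂_ξ^β φ| ≤ C_{αβ} for every α and every β with |β| ≥ 2. Then for all multi-indices α, β there exists a constant C'_{αβ} (depending on α, β, M and the above constants, but not on h) such that the function G_h(x,ξ) := b(φ(x,ξ)/h) satisfies |∂_x^α ∂_ξ^β G_h(x,ξ)| ≤ C'_{αβ} h^{-|β|/2} G_h(x,ξ) for all (x,ξ) ∈ U and all h ∈ (0,1]. -/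
/- STATEMENT 6: the chain-rule/Leibniz symbol estimate (2.20)–(2.21) of the paper:
   if all derivatives of b are pointwise controlled by b, and the phase φ(x,ξ) ≥ 0
   satisfies |∂_x^α φ| ≲ Mh, |∂_x^α ∂_ξ φ| ≲ M^{1/2}h^{1/2}, |∂_x^α ∂_ξ^β φ| ≲ 1 for
   |β| ≥ 2, then G_h = b(φ/h) satisfies the S^{comp}_{1/2}-type pointwise bounds
   |∂_x^α ∂_ξ^β G_h| ≤ C h^{-|β|/2} G_h.

   Multi-index derivatives ∂_x^α ∂_ξ^β are encoded as iterated directional derivatives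
   along a list of coordinate directions: an entry `Sum.inl j` is a derivative in the
   x-variable x_j, an entry `Sum.inr j` a derivative in the ξ-variable ξ_j; `|α|` and
   `|β|` are the numbers of `inl`- resp. `inr`-entries of the list. -/

open MeasureTheory Real

noncomputable section

variable {m : ℕ}

/-- The coordinate direction in `(x,ξ)`-space associated to an index:
`Sum.inl j` is the x-direction `e_j`, `Sum.inr j` the ξ-direction `e_j`. -/
def coordDir (i : Fin m ⊕ Fin m) :
    EuclideanSpace ℝ (Fin m) × EuclideanSpace ℝ (Fin m) :=
  Sum.elim (fun j => (EuclideanSpace.single j (1 : ℝ), 0))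
    (fun j => (0, EuclideanSpace.single j (1 : ℝ))) i

/-- Iterated directional derivative along a list of directions. -/
def iterDirDeriv :
    List (EuclideanSpace ℝ (Fin m) × EuclideanSpace ℝ (Fin m)) →
      (EuclideanSpace ℝ (Fin m) × EuclideanSpace ℝ (Fin m) → ℝ) →
      EuclideanSpace ℝ (Fin m) × EuclideanSpace ℝ (Fin m) → ℝ
  | [], f => f
  | v :: L, f => fun p => fderiv ℝ (iterDirDeriv L f) p v

namespace SymAux

open scoped ContDiff

def ins {α : Type*} (i : α) : List (List α) → List (List (List α))
  | [] => []
  | B :: Bs => ((i :: B) :: Bs) :: (ins i Bs).map (fun Bs' => B :: Bs')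

def step' {α : Type*} (i : α) (Bs : List (List α)) : List (List (List α)) :=
  ([i] :: Bs) :: ins i Bs

def terms {α : Type*} : List α → List (List (List α))
  | [] => [[]]
  | i :: L => (terms L).flatMap (step' i)

lemma sum_map_ins {α : Type*} (q : α → Bool) (i : α) :
    ∀ {Bs Bs' : List (List α)}, Bs' ∈ ins i Bs →
      (Bs'.map (List.countP q)).sum
        = (Bs.map (List.countP q)).sum + (if q i then 1 else 0) := by
  intro Bs
  induction Bs with
  | nil => intro Bs' h; simp [ins] at h
  | cons B Bs ih =>
    intro Bs' h
    simp only [ins, List.mem_cons, List.mem_map] at h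
    rcases h with rfl | ⟨Bs'', hBs'', rfl⟩
    · simp [List.countP_cons]; ring
    · simp only [List.map_cons, List.sum_cons, ih hBs'']; ring

lemma ne_nil_ins {α : Type*} {i : α} :
    ∀ {Bs Bs' : List (List α)}, Bs' ∈ ins i Bs → (∀ B ∈ Bs, B ≠ []) →
      ∀ B ∈ Bs', B ≠ [] := by
  intro Bs
  induction Bs with
  | nil => intro Bs' h; simp [ins] at h
  | cons B Bs ih =>
    intro Bs' h hne
    simp only [ins, List.mem_cons, List.mem_map] at h
    rcases h with rfl | ⟨Bs'', hBs'', rfl⟩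
    · intro B' hB'
      rcases List.mem_cons.1 hB' with rfl | hB'
      · simp
      · exact hne B' (List.mem_cons_of_mem _ hB')
    · intro B' hB'
      rcases List.mem_cons.1 hB' with rfl | hB'
      · exact hne B' List.mem_cons_self
      · exact ih hBs'' (fun B hB => hne B (List.mem_cons_of_mem _ hB)) B' hB'

lemma terms_invariant {α : Type*} (q : α → Bool) :
    ∀ (L : List α) {Bs : List (List α)}, Bs ∈ terms L →
      (∀ B ∈ Bs, B ≠ []) ∧ (Bs.map (List.countP q)).sum = L.countP q := by
  intro L
  induction L with
  | nil => intro Bs h; simp [terms] at h; subst h; simp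
  | cons i L ih =>
    intro Bs h
    simp only [terms, List.mem_flatMap] at h
    obtain ⟨Bs₀, hBs₀, hmem⟩ := h
    obtain ⟨hne₀, hsum₀⟩ := ih hBs₀
    rcases List.mem_cons.1 hmem with rfl | hins
    · constructor
      · intro B hB
        rcases List.mem_cons.1 hB with rfl | hB
        · simp
        · exact hne₀ B hB
      · simp [List.countP_cons, hsum₀]; ring
    · refine ⟨ne_nil_ins hins hne₀, ?_⟩
      rw [sum_map_ins q i hins, hsum₀, List.countP_cons]


lemma length_ins {α : Type*} {i : α} :
    ∀ {Bs Bs' : List (List α)}, Bs' ∈ ins i Bs → Bs'.length = Bs.length := by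
  intro Bs
  induction Bs with
  | nil => intro Bs' h; simp [ins] at h
  | cons B Bs ih =>
    intro Bs' h
    simp only [ins, List.mem_cons, List.mem_map] at h
    rcases h with rfl | ⟨Bs'', hBs'', rfl⟩
    · simp
    · simp [ih hBs'']

lemma diffAt_list_prod {F : Type*} [NormedAddCommGroup F] [NormedSpace ℝ F]
    {ι : Type*} (g : ι → F → ℝ) (p : F) :
    ∀ l : List ι, (∀ i ∈ l, DifferentiableAt ℝ (g i) p) →
      DifferentiableAt ℝ (fun q => (l.map (fun i => g i q)).prod) p
  | [], _ => by simp only [List.map_nil, List.prod_nil]; exact differentiableAt_const (1 : ℝ)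
  | i :: l, hf => by
    simp only [List.map_cons, List.prod_cons]
    exact (hf i (by simp)).mul (diffAt_list_prod g p l fun j hj => hf j (by simp [hj]))

lemma fderiv_prod_ins {F : Type*} [NormedAddCommGroup F] [NormedSpace ℝ F]
    {α : Type*} (g : List α → F → ℝ) (i : α) (p : F) (v : F)
    (hdiff : ∀ B : List α, DifferentiableAt ℝ (g B) p)
    (hder : ∀ B : List α, fderiv ℝ (g B) p v = g (i :: B) p) :
    ∀ Bs : List (List α),
      fderiv ℝ (fun q => (Bs.map (fun B => g B q)).prod) p v
        = ((ins i Bs).map (fun Bs' => (Bs'.map (fun B => g B p)).prod)).sum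
  | [] => by simp [ins]
  | B :: Bs => by
    have hP : DifferentiableAt ℝ (fun q => (Bs.map (fun B => g B q)).prod) p :=
      diffAt_list_prod g p Bs (fun j _ => hdiff j)
    have ih := fderiv_prod_ins g i p v hdiff hder Bs
    simp only [List.map_cons, List.prod_cons]
    rw [fderiv_fun_mul (hdiff B) hP]
    simp only [ContinuousLinearMap.add_apply, ContinuousLinearMap.smul_apply,
      smul_eq_mul, hder B, ih, ins, List.map_cons, List.sum_cons, List.map_map]
    simp only [Function.comp_def, List.map_cons, List.prod_cons]
    rw [List.sum_map_mul_left]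
    ring

lemma fderiv_real_apply {F : Type*} [NormedAddCommGroup F] [NormedSpace ℝ F]
    {ψ : F → ℝ} {g : ℝ → ℝ} {p : F} (hg : DifferentiableAt ℝ g (ψ p))
    (hψ : DifferentiableAt ℝ ψ p) (v : F) :
    fderiv ℝ (fun q => g (ψ q)) p v = deriv g (ψ p) * fderiv ℝ ψ p v := by
  rw [show (fun q => g (ψ q)) = g ∘ ψ from rfl, fderiv_comp p hg hψ]
  have : fderiv ℝ g (ψ p) (fderiv ℝ ψ p v)
      = (fderiv ℝ ψ p v) • fderiv ℝ g (ψ p) 1 := by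
    rw [← (fderiv ℝ g (ψ p)).map_smul]; norm_num
  simp only [ContinuousLinearMap.comp_apply, this, fderiv_apply_one_eq_deriv, smul_eq_mul]
  ring

lemma fderiv_div_const' {F : Type*} [NormedAddCommGroup F] [NormedSpace ℝ F]
    {f : F → ℝ} {p : F} (hf : DifferentiableAt ℝ f p) (c : ℝ) (v : F) :
    fderiv ℝ (fun q => f q / c) p v = fderiv ℝ f p v / c := by
  simp only [div_eq_inv_mul]
  rw [fderiv_const_mul hf]
  simp [smul_eq_mul]

lemma diffAt_list_sum {F : Type*} [NormedAddCommGroup F] [NormedSpace ℝ F]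
    {ι : Type*} (g : ι → F → ℝ) (p : F) :
    ∀ l : List ι, (∀ i ∈ l, DifferentiableAt ℝ (g i) p) →
      DifferentiableAt ℝ (fun q => (l.map (fun i => g i q)).sum) p
  | [], _ => by simp only [List.map_nil, List.sum_nil]; exact differentiableAt_const 0
  | i :: l, hf => by
    simp only [List.map_cons, List.sum_cons]
    exact (hf i (by simp)).add (diffAt_list_sum g p l fun j hj => hf j (by simp [hj]))

lemma fderiv_list_sum {F : Type*} [NormedAddCommGroup F] [NormedSpace ℝ F]
    {ι : Type*} (g : ι → F → ℝ) (p : F) (v : F) :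
    ∀ l : List ι, (∀ i ∈ l, DifferentiableAt ℝ (g i) p) →
      fderiv ℝ (fun q => (l.map (fun i => g i q)).sum) p v
        = (l.map (fun i => fderiv ℝ (g i) p v)).sum
  | [], _ => by simp
  | i :: l, hf => by
    simp only [List.map_cons, List.sum_cons]
    rw [fderiv_fun_add (hf i (by simp)) (diffAt_list_sum g p l fun j hj => hf j (by simp [hj]))]
    simp [fderiv_list_sum g p v l (fun j hj => hf j (by simp [hj]))]

lemma sum_map_flatMap {α β : Type*} (g : β → ℝ) (f : α → List β) :
    ∀ l : List α, ((l.flatMap f).map g).sum = (l.map (fun a => ((f a).map g).sum)).sum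
  | [] => by simp
  | a :: l => by
    simp [List.flatMap_cons, sum_map_flatMap g f l]


abbrev E2 (m : ℕ) := EuclideanSpace ℝ (Fin m) × EuclideanSpace ℝ (Fin m)

lemma contDiffOn_iterDirDeriv {U : Set (E2 m)} (hU : IsOpen U)
    {φ : E2 m → ℝ} (hφ : ContDiffOn ℝ (⊤ : ℕ∞) φ U) :
    ∀ vs : List (E2 m), ContDiffOn ℝ (⊤ : ℕ∞) (iterDirDeriv vs φ) U
  | [] => hφ
  | v :: vs => by
    have ih := contDiffOn_iterDirDeriv hU hφ vs
    have h1 : ContDiffOn ℝ (⊤ : ℕ∞) (fun p => fderiv ℝ (iterDirDeriv vs φ) p) U :=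
      ih.fderiv_of_isOpen hU (by simp)
    exact h1.clm_apply contDiffOn_const

def val (b : ℝ → ℝ) (φ : E2 m → ℝ) (h : ℝ) (Bs : List (List (Fin m ⊕ Fin m)))
    (p : E2 m) : ℝ :=
  iteratedDeriv Bs.length b (φ p / h) *
    (Bs.map (fun B => iterDirDeriv (B.map coordDir) φ p / h)).prod

section
variable {U : Set (E2 m)} (hU : IsOpen U) {φ : E2 m → ℝ} (hφ : ContDiffOn ℝ (⊤ : ℕ∞) φ U)
  {b : ℝ → ℝ} (hb : ContDiff ℝ (⊤ : ℕ∞) b) {h : ℝ}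

include hU hφ hb

omit hb in
lemma diffAt_iter (vs : List (E2 m)) {p : E2 m} (hp : p ∈ U) :
    DifferentiableAt ℝ (iterDirDeriv vs φ) p :=
  ((contDiffOn_iterDirDeriv hU hφ vs).differentiableOn (by simp)).differentiableAt
    (hU.mem_nhds hp)

omit hb in
lemma diffAt_g (B : List (Fin m ⊕ Fin m)) {p : E2 m} (hp : p ∈ U) :
    DifferentiableAt ℝ (fun q => iterDirDeriv (B.map coordDir) φ q / h) p := by
  simpa [div_eq_mul_inv] using (diffAt_iter hU hφ (B.map coordDir) hp).mul_const h⁻¹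

omit hb in
lemma fderiv_g (B : List (Fin m ⊕ Fin m)) (i : Fin m ⊕ Fin m) {p : E2 m} (hp : p ∈ U) :
    fderiv ℝ (fun q => iterDirDeriv (B.map coordDir) φ q / h) p (coordDir i)
      = iterDirDeriv ((i :: B).map coordDir) φ p / h := by
  rw [fderiv_div_const' (diffAt_iter hU hφ _ hp) h]
  rfl

omit hU hφ in
lemma contDiff_iteratedDeriv (k : ℕ) : ContDiff ℝ ∞ (iteratedDeriv k b) := by
  rw [iteratedDeriv_eq_iterate]
  exact ContDiff.iterate_deriv k (hb.of_le (by simp))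

omit hb in
lemma diffAt_phidiv {p : E2 m} (hp : p ∈ U) :
    DifferentiableAt ℝ (fun q => φ q / h) p := by
  simpa [div_eq_mul_inv, iterDirDeriv] using (diffAt_iter hU hφ [] hp).mul_const h⁻¹

lemma diffAt_Fb (k : ℕ) {p : E2 m} (hp : p ∈ U) :
    DifferentiableAt ℝ (fun q => iteratedDeriv k b (φ q / h)) p := by
  have := (((contDiff_iteratedDeriv hb k).differentiable (by norm_num)) (φ p / h)).comp p
    (diffAt_phidiv (h := h) hU hφ hp)
  exact this

lemma fderiv_Fb (k : ℕ) (i : Fin m ⊕ Fin m) {p : E2 m} (hp : p ∈ U) :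
    fderiv ℝ (fun q => iteratedDeriv k b (φ q / h)) p (coordDir i)
      = iteratedDeriv (k + 1) b (φ p / h) * (iterDirDeriv ([i].map coordDir) φ p / h) := by
  rw [fderiv_real_apply (g := iteratedDeriv k b) (ψ := fun q => φ q / h)
      (((contDiff_iteratedDeriv hb k).differentiable (by norm_num)) (φ p / h))
      (diffAt_phidiv hU hφ hp) (coordDir i)]
  rw [← iteratedDeriv_succ,
    fderiv_div_const' (f := φ) (diffAt_iter hU hφ [] hp) h (coordDir i)]
  rfl

lemma diffAt_val (Bs : List (List (Fin m ⊕ Fin m))) {p : E2 m} (hp : p ∈ U) :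
    DifferentiableAt ℝ (val b φ h Bs) p :=
  (diffAt_Fb hU hφ hb _ hp).mul
    (diffAt_list_prod (fun B q => iterDirDeriv (B.map coordDir) φ q / h) p Bs
      (fun B _ => diffAt_g hU hφ B hp))

lemma fderiv_val (Bs : List (List (Fin m ⊕ Fin m))) (i : Fin m ⊕ Fin m)
    {p : E2 m} (hp : p ∈ U) :
    fderiv ℝ (val b φ h Bs) p (coordDir i)
      = ((step' i Bs).map (fun Bs' => val b φ h Bs' p)).sum := by
  have hmul := fderiv_fun_mul (𝕜 := ℝ) (x := p)
    (c := fun q => iteratedDeriv Bs.length b (φ q / h))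
    (d := fun q => (Bs.map (fun B => iterDirDeriv (B.map coordDir) φ q / h)).prod)
    (diffAt_Fb hU hφ hb Bs.length hp)
    (diffAt_list_prod (fun B q => iterDirDeriv (B.map coordDir) φ q / h) p Bs
      (fun B _ => diffAt_g hU hφ B hp))
  have LHS : fderiv ℝ (val b φ h Bs) p (coordDir i)
      = iteratedDeriv Bs.length b (φ p / h) *
          fderiv ℝ (fun q => (Bs.map (fun B => iterDirDeriv (B.map coordDir) φ q / h)).prod)
            p (coordDir i)
        + (Bs.map (fun B => iterDirDeriv (B.map coordDir) φ p / h)).prod *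
          fderiv ℝ (fun q => iteratedDeriv Bs.length b (φ q / h)) p (coordDir i) := by
    have : val b φ h Bs = fun q => (fun q => iteratedDeriv Bs.length b (φ q / h)) q *
        (fun q => (Bs.map (fun B => iterDirDeriv (B.map coordDir) φ q / h)).prod) q := rfl
    rw [this, hmul]
    simp [smul_eq_mul]
  rw [LHS,
    fderiv_prod_ins (fun B q => iterDirDeriv (B.map coordDir) φ q / h) i p (coordDir i)
      (fun B => diffAt_g hU hφ B hp) (fun B => fderiv_g hU hφ B i hp) Bs,
    fderiv_Fb hU hφ hb Bs.length i hp]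
  have hins : (ins i Bs).map (fun Bs' => val b φ h Bs' p)
      = (ins i Bs).map (fun Bs' => iteratedDeriv Bs.length b (φ p / h) *
          (Bs'.map (fun B => iterDirDeriv (B.map coordDir) φ p / h)).prod) := by
    refine List.map_congr_left (fun Bs' hBs' => ?_)
    rw [val, length_ins hBs']
  simp only [step', List.map_cons, List.sum_cons]
  rw [hins, List.sum_map_mul_left]
  simp only [val, List.map_cons, List.prod_cons, List.length_cons, List.map_nil]
  ring

lemma main_identity :
    ∀ (L : List (Fin m ⊕ Fin m)), ∀ p ∈ U,
      iterDirDeriv (L.map coordDir) (fun q => b (φ q / h)) p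
        = ((terms L).map (fun Bs => val b φ h Bs p)).sum := by
  intro L
  induction L with
  | nil => intro p hp; simp [terms, val, iterDirDeriv]
  | cons i L ih =>
    intro p hp
    have heq : iterDirDeriv (L.map coordDir) (fun q => b (φ q / h))
        =ᶠ[nhds p] fun q => ((terms L).map (fun Bs => val b φ h Bs q)).sum :=
      Filter.eventuallyEq_of_mem (hU.mem_nhds hp) ih
    have : iterDirDeriv ((i :: L).map coordDir) (fun q => b (φ q / h)) p
        = fderiv ℝ (iterDirDeriv (L.map coordDir) (fun q => b (φ q / h))) p (coordDir i) := rfl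
    rw [this, heq.fderiv_eq,
      fderiv_list_sum (fun Bs q => val b φ h Bs q) p (coordDir i) (terms L)
        (fun Bs _ => diffAt_val hU hφ hb Bs hp),
      List.map_congr_left (fun Bs _ => fderiv_val hU hφ hb Bs i hp)]
    show _ = ((terms (i :: L)).map (fun Bs => val b φ h Bs p)).sum
    rw [show terms (i :: L) = (terms L).flatMap (step' i) from rfl,
      sum_map_flatMap (fun Bs => val b φ h Bs p) (step' i) (terms L)]

end


lemma abs_list_sum_le {α : Type*} (f g : α → ℝ) :
    ∀ l : List α, (∀ a ∈ l, |f a| ≤ g a) → |(l.map f).sum| ≤ (l.map g).sum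
  | [], _ => by simp
  | a :: l, hfg => by
    simp only [List.map_cons, List.sum_cons]
    exact (abs_add_le _ _).trans (add_le_add (hfg a (by simp))
      (abs_list_sum_le f g l fun x hx => hfg x (by simp [hx])))

end SymAux

open SymAux in
theorem exotic_symbol_estimate (hm : 1 ≤ m) (M : ℝ) (hM : 1 ≤ M)
    (b : ℝ → ℝ) (hb : ContDiff ℝ (⊤ : ℕ∞) b) (hbpos : ∀ t : ℝ, 0 < b t)
    (Cb : ℕ → ℝ)
    (hCb : ∀ k : ℕ, ∀ t : ℝ, 0 ≤ t → |iteratedDeriv k b t| ≤ Cb k * b t)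
    (U : Set (EuclideanSpace ℝ (Fin m) × EuclideanSpace ℝ (Fin m))) (hU : IsOpen U)
    (φ : EuclideanSpace ℝ (Fin m) × EuclideanSpace ℝ (Fin m) → ℝ)
    (hφsmooth : ContDiffOn ℝ (⊤ : ℕ∞) φ U) (hφnonneg : ∀ p ∈ U, 0 ≤ φ p)
    (Cφ : List (Fin m ⊕ Fin m) → ℝ)
    -- |∂_x^α φ| ≤ C_α M h for |α| ≥ 1 (no ξ-derivatives)
    (hx : ∀ L : List (Fin m ⊕ Fin m), L ≠ [] → (∀ i ∈ L, i.isLeft = true) →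
      ∀ h : ℝ, h ∈ Set.Ioc (0 : ℝ) 1 → ∀ p ∈ U,
        |iterDirDeriv (L.map coordDir) φ p| ≤ Cφ L * M * h)
    -- |∂_x^α ∂_ξ^β φ| ≤ C_{αβ} M^{1/2} h^{1/2} for |β| = 1
    (hξ1 : ∀ L : List (Fin m ⊕ Fin m), L.countP Sum.isRight = 1 →
      ∀ h : ℝ, h ∈ Set.Ioc (0 : ℝ) 1 → ∀ p ∈ U,
        |iterDirDeriv (L.map coordDir) φ p| ≤ Cφ L * Real.sqrt M * Real.sqrt h)
    -- |∂_x^α ∂_ξ^β φ| ≤ C_{αβ} for |β| ≥ 2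
    (hξ2 : ∀ L : List (Fin m ⊕ Fin m), 2 ≤ L.countP Sum.isRight →
      ∀ h : ℝ, h ∈ Set.Ioc (0 : ℝ) 1 → ∀ p ∈ U,
        |iterDirDeriv (L.map coordDir) φ p| ≤ Cφ L) :
    ∀ L : List (Fin m ⊕ Fin m), ∃ C' : ℝ, 0 < C' ∧
      ∀ h : ℝ, h ∈ Set.Ioc (0 : ℝ) 1 → ∀ p ∈ U,
        |iterDirDeriv (L.map coordDir) (fun q => b (φ q / h)) p| ≤
          C' * h ^ (-(L.countP Sum.isRight : ℝ) / 2) * b (φ p / h) := by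
  intro L
  have hM0 : (0:ℝ) < M := lt_of_lt_of_le one_pos hM
  have hDBpos : ∀ B : List (Fin m ⊕ Fin m), (0:ℝ) < (|Cφ B| + 1) * M :=
    fun B => mul_pos (by positivity) hM0
  have hprodpos : ∀ Bs : List (List (Fin m ⊕ Fin m)),
      (0:ℝ) < (Bs.map (fun B => (|Cφ B| + 1) * M)).prod := by
    intro Bs
    refine List.prod_pos ?_
    intro x hx'
    obtain ⟨B, _, rfl⟩ := List.mem_map.1 hx'
    exact hDBpos B
  -- per-block bound
  have hblock : ∀ B : List (Fin m ⊕ Fin m), B ≠ [] →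
      ∀ h : ℝ, h ∈ Set.Ioc (0:ℝ) 1 → ∀ p ∈ U,
        |iterDirDeriv (B.map coordDir) φ p / h|
          ≤ ((|Cφ B| + 1) * M) * h ^ (-(B.countP Sum.isRight : ℝ) / 2) := by
    intro B hB h hh p hp
    obtain ⟨hh0, hh1⟩ := hh
    rw [abs_div, abs_of_pos hh0, div_le_iff₀ hh0]
    rcases Nat.lt_or_ge (B.countP Sum.isRight) 2 with hlt | hge
    · have h01 : B.countP Sum.isRight = 0 ∨ B.countP Sum.isRight = 1 := by omega
      rcases h01 with h0 | h1
      · have hleft : ∀ i ∈ B, i.isLeft = true := by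
          intro i hi
          have hni := List.countP_eq_zero.1 h0 i hi
          cases i with
          | inl j => rfl
          | inr j => simp at hni
        have hb1 := hx B hB hleft h ⟨hh0, hh1⟩ p hp
        rw [h0]
        have hE : h ^ (-((0:ℕ):ℝ)/2) = 1 := by norm_num
        rw [hE, mul_one]
        nlinarith [le_abs_self (Cφ B), abs_nonneg (Cφ B),
          mul_pos (lt_of_lt_of_le one_pos hM) hh0]
      · have hb1 := hξ1 B h1 h ⟨hh0, hh1⟩ p hp
        rw [h1, mul_assoc]
        have hE : h ^ (-((1:ℕ):ℝ)/2) * h = Real.sqrt h := by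
          have e1 : h ^ (-((1:ℕ):ℝ)/2) * h = h ^ (-((1:ℕ):ℝ)/2) * h ^ (1:ℝ) := by
            rw [Real.rpow_one]
          rw [e1, ← Real.rpow_add hh0, Real.sqrt_eq_rpow]
          norm_num
        rw [hE]
        have hsM : Real.sqrt M ≤ M := by
          nlinarith [Real.sq_sqrt (le_trans zero_le_one hM), Real.sqrt_nonneg M]
        calc |iterDirDeriv (B.map coordDir) φ p|
            ≤ Cφ B * Real.sqrt M * Real.sqrt h := hb1
          _ ≤ (|Cφ B| + 1) * M * Real.sqrt h := by
              apply mul_le_mul_of_nonneg_right _ (Real.sqrt_nonneg h)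
              calc Cφ B * Real.sqrt M ≤ |Cφ B| * Real.sqrt M :=
                    mul_le_mul_of_nonneg_right (le_abs_self _) (Real.sqrt_nonneg M)
                _ ≤ (|Cφ B| + 1) * M := by
                    nlinarith [abs_nonneg (Cφ B), Real.sqrt_nonneg M, hsM, hM]
    · have hb1 := hξ2 B hge h ⟨hh0, hh1⟩ p hp
      have h2r : (2:ℝ) ≤ (B.countP Sum.isRight : ℝ) := by exact_mod_cast hge
      have h1X : h ^ (-1:ℝ) ≤ h ^ (-(B.countP Sum.isRight : ℝ)/2) := by
        apply Real.rpow_le_rpow_of_exponent_ge hh0 hh1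
        linarith
      have hone : (1:ℝ) ≤ h ^ (-(B.countP Sum.isRight : ℝ)/2) * h := by
        have := mul_le_mul_of_nonneg_right h1X hh0.le
        rwa [Real.rpow_neg_one, inv_mul_cancel₀ hh0.ne'] at this
      calc |iterDirDeriv (B.map coordDir) φ p| ≤ Cφ B := hb1
        _ ≤ (|Cφ B| + 1) * M := by
            nlinarith [le_abs_self (Cφ B), abs_nonneg (Cφ B)]
        _ ≤ (|Cφ B| + 1) * M * (h ^ (-(B.countP Sum.isRight : ℝ)/2) * h) :=
            le_mul_of_one_le_right (hDBpos B).le hone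
        _ = (|Cφ B| + 1) * M * h ^ (-(B.countP Sum.isRight : ℝ)/2) * h := by ring
  -- product-over-blocks bound
  have hprod : ∀ h : ℝ, h ∈ Set.Ioc (0:ℝ) 1 → ∀ p ∈ U,
      ∀ Bs : List (List (Fin m ⊕ Fin m)), (∀ B ∈ Bs, B ≠ []) →
      |(Bs.map (fun B => iterDirDeriv (B.map coordDir) φ p / h)).prod|
        ≤ (Bs.map (fun B => (|Cφ B| + 1) * M)).prod *
            h ^ (-(((Bs.map (List.countP Sum.isRight)).sum : ℕ) : ℝ) / 2) := by
    intro h hh p hp Bs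
    induction Bs with
    | nil => intro _; simp
    | cons B Bs ih =>
      intro hne
      have h1 := hblock B (hne B (by simp)) h hh p hp
      have h2 := ih (fun B' hB' => hne B' (by simp [hB']))
      simp only [List.map_cons, List.prod_cons, List.sum_cons]
      rw [abs_mul]
      have hstep := mul_le_mul h1 h2 (abs_nonneg _)
        (mul_pos (hDBpos B) (Real.rpow_pos_of_pos hh.1 _)).le
      refine hstep.trans (le_of_eq ?_)
      rw [mul_mul_mul_comm, ← Real.rpow_add hh.1]
      congr 2
      push_cast
      ring
  -- the constant
  refine ⟨((terms L).map (fun Bs => |Cb Bs.length| *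
      (Bs.map (fun B => (|Cφ B| + 1) * M)).prod)).sum + 1, ?_, ?_⟩
  · have hS : 0 ≤ ((terms L).map (fun Bs => |Cb Bs.length| *
        (Bs.map (fun B => (|Cφ B| + 1) * M)).prod)).sum := by
      refine List.sum_nonneg ?_
      intro a ha
      obtain ⟨Bs, _, rfl⟩ := List.mem_map.1 ha
      exact mul_nonneg (abs_nonneg _) (hprodpos Bs).le
    linarith
  · intro h hh p hp
    have hh0 := hh.1
    have ht0 : 0 ≤ φ p / h := div_nonneg (hφnonneg p hp) hh0.le
    have hbt := hbpos (φ p / h)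
    rw [main_identity hU hφsmooth hb L p hp]
    have hterm : ∀ Bs ∈ terms L,
        |val b φ h Bs p| ≤ (|Cb Bs.length| *
            (Bs.map (fun B => (|Cφ B| + 1) * M)).prod) *
          (h ^ (-(L.countP Sum.isRight : ℝ)/2) * b (φ p / h)) := by
      intro Bs hBs
      obtain ⟨hne, hsum⟩ := terms_invariant Sum.isRight L hBs
      have h1 : |iteratedDeriv Bs.length b (φ p / h)| ≤ |Cb Bs.length| * b (φ p / h) :=
        (hCb Bs.length _ ht0).trans
          (mul_le_mul_of_nonneg_right (le_abs_self _) hbt.le)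
      have h2 := hprod h hh p hp Bs hne
      simp only [val]
      rw [abs_mul]
      have := mul_le_mul h1 h2 (abs_nonneg _) (mul_nonneg (abs_nonneg _) hbt.le)
      refine this.trans (le_of_eq ?_)
      rw [hsum]
      ring
    have habs := abs_list_sum_le (fun Bs => val b φ h Bs p)
      (fun Bs => (|Cb Bs.length| * (Bs.map (fun B => (|Cφ B| + 1) * M)).prod) *
        (h ^ (-(L.countP Sum.isRight : ℝ)/2) * b (φ p / h))) (terms L) hterm
    refine habs.trans ?_
    rw [List.sum_map_mul_right]
    have hK : 0 < h ^ (-(L.countP Sum.isRight : ℝ)/2) * b (φ p / h) :=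
      mul_pos (Real.rpow_pos_of_pos hh0 _) hbt
    have hS : 0 ≤ ((terms L).map (fun Bs => |Cb Bs.length| *
        (Bs.map (fun B => (|Cφ B| + 1) * M)).prod)).sum := by
      refine List.sum_nonneg ?_
      intro a ha
      obtain ⟨Bs, _, rfl⟩ := List.mem_map.1 ha
      exact mul_nonneg (abs_nonneg _) (hprodpos Bs).le
    calc ((terms L).map (fun Bs => |Cb Bs.length| *
            (Bs.map (fun B => (|Cφ B| + 1) * M)).prod)).sum *
          (h ^ (-(L.countP Sum.isRight : ℝ)/2) * b (φ p / h))
        ≤ (((terms L).map (fun Bs => |Cb Bs.length| *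
            (Bs.map (fun B => (|Cφ B| + 1) * M)).prod)).sum + 1) *
          (h ^ (-(L.countP Sum.isRight : ℝ)/2) * b (φ p / h)) := by nlinarith
      _ = (((terms L).map (fun Bs => |Cb Bs.length| *
            (Bs.map (fun B => (|Cφ B| + 1) * M)).prod)).sum + 1) *
          h ^ (-(L.countP Sum.isRight : ℝ)/2) * b (φ p / h) := by ring


end
end

section
/- Let K > 0, A, B ∈ ℝ, R > 0, and let L : [0, R] → ℝ be continuous and satisfy the integral inequality L(r) ≥ A − B r + K ∫₀^r ∫₀^s L(t) dt ds for all r ∈ [0, R]. Then L(r) ≥ Z(r) for all r ∈ [0, R], where Z(r) = A cosh(√K r) − (B/√K) sinh(√K r) is the solution of the corresponding integral equality Z(r) = A − B r + K ∫₀^r ∫₀^s Z(t) dt ds. -/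
/-!
Write `Z(r) = A cosh(√K r) − (B/√K) sinh(√K r)`. Since `Z'' = K Z`, `Z(0) = A` and `Z'(0) = −B`,
Taylor's formula shows that `Z` satisfies the integral inequality with equality, so `W = L − Z`
satisfies `W(r) ≥ K ∫₀^r ∫₀^s W`. Starting from a bound `|W| ≤ C` and iterating this inequality
gives `W(r) ≥ −C (K r²)ⁿ / (2n)!` for every `n`, and the right-hand side tends to `0`.
-/

open Real intervalIntegral MeasureTheory Filter Set Topology Nat

section DoubleIntegral

variable {f g : ℝ → ℝ} {r : ℝ}

lemma intervalIntegrable_of_continuousOn_Icc (hf : ContinuousOn f (Icc 0 r)) {s : ℝ}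
    (hs : s ∈ Icc 0 r) : IntervalIntegrable f volume 0 s :=
  (hf.mono <| by rw [uIcc_of_le hs.1]; exact Icc_subset_Icc_right hs.2).intervalIntegrable

lemma intervalIntegrable_primitive_of_continuousOn_Icc (hr : 0 ≤ r)
    (hf : ContinuousOn f (Icc 0 r)) :
    IntervalIntegrable (fun s => ∫ t in 0..s, f t) volume 0 r := by
  rw [← uIcc_of_le hr] at hf
  exact (continuousOn_primitive_interval hf.integrableOn_uIcc).intervalIntegrable

lemma integral_integral_sub (hr : 0 ≤ r) (hf : ContinuousOn f (Icc 0 r))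
    (hg : ContinuousOn g (Icc 0 r)) :
    ∫ s in 0..r, ∫ t in 0..s, (f t - g t) =
      (∫ s in 0..r, ∫ t in 0..s, f t) - ∫ s in 0..r, ∫ t in 0..s, g t := by
  rw [integral_congr fun s hs => integral_sub
    (intervalIntegrable_of_continuousOn_Icc hf (uIcc_of_le hr ▸ hs))
    (intervalIntegrable_of_continuousOn_Icc hg (uIcc_of_le hr ▸ hs))]
  exact integral_sub (intervalIntegrable_primitive_of_continuousOn_Icc hr hf)
    (intervalIntegrable_primitive_of_continuousOn_Icc hr hg)

lemma integral_integral_mono_on (hr : 0 ≤ r) (hf : ContinuousOn f (Icc 0 r))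
    (hg : ContinuousOn g (Icc 0 r)) (hfg : ∀ t ∈ Icc 0 r, f t ≤ g t) :
    ∫ s in 0..r, ∫ t in 0..s, f t ≤ ∫ s in 0..r, ∫ t in 0..s, g t :=
  integral_mono_on hr (intervalIntegrable_primitive_of_continuousOn_Icc hr hf)
    (intervalIntegrable_primitive_of_continuousOn_Icc hr hg) fun _ hs =>
      integral_mono_on hs.1 (intervalIntegrable_of_continuousOn_Icc hf hs)
        (intervalIntegrable_of_continuousOn_Icc hg hs) fun t ht => hfg t ⟨ht.1, ht.2.trans hs.2⟩

lemma integral_integral_pow (m : ℕ) (r : ℝ) :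
    ∫ s in 0..r, ∫ t in 0..s, t ^ m = r ^ (m + 2) / ((m + 1) * (m + 2)) := by
  simp only [integral_pow, zero_pow (Nat.succ_ne_zero _), sub_zero, div_eq_mul_inv,
    intervalIntegral.integral_mul_const]
  field_simp
  push_cast
  ring

lemma integral_integral_eq_of_hasDerivAt {f' f'' : ℝ → ℝ} (hf : ∀ x, HasDerivAt f (f' x) x)
    (hf' : ∀ x, HasDerivAt f' (f'' x) x) (hf'' : Continuous f'') (r : ℝ) :
    ∫ s in 0..r, ∫ t in 0..s, f'' t = f r - f 0 - f' 0 * r := by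
  have hf'_cont : Continuous f' := continuous_iff_continuousAt.2 fun x => (hf' x).continuousAt
  have inner : ∀ s, ∫ t in 0..s, f'' t = f' s - f' 0 := fun s =>
    integral_eq_sub_of_hasDerivAt (fun x _ => hf' x) (hf''.intervalIntegrable _ _)
  simp only [inner]
  rw [integral_sub (hf'_cont.intervalIntegrable _ _) intervalIntegrable_const,
    integral_eq_sub_of_hasDerivAt (fun x _ => hf x) (hf'_cont.intervalIntegrable _ _),
    intervalIntegral.integral_const, smul_eq_mul]
  ring

end DoubleIntegral

lemma cosh_sub_sinh_eq_integral_integral {c : ℝ} (hc : c ≠ 0) (A B r : ℝ) :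
    A * cosh (c * r) - B / c * sinh (c * r) =
      A - B * r + c ^ 2 * ∫ s in 0..r, ∫ t in 0..s, (A * cosh (c * t) - B / c * sinh (c * t)) := by
  set Z : ℝ → ℝ := fun t => A * cosh (c * t) - B / c * sinh (c * t)
  have hlin (x : ℝ) : HasDerivAt (fun t => c * t) c x := by
    simpa using (hasDerivAt_id x).const_mul c
  have hZ (x : ℝ) : HasDerivAt Z (A * c * sinh (c * x) - B * cosh (c * x)) x := by
    refine (((hlin x).cosh.const_mul A).sub ((hlin x).sinh.const_mul (B / c))).congr_deriv ?_
    field_simp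
  have hZ' (x : ℝ) :
      HasDerivAt (fun t => A * c * sinh (c * t) - B * cosh (c * t)) (c ^ 2 * Z x) x := by
    refine (((hlin x).sinh.const_mul (A * c)).sub ((hlin x).cosh.const_mul B)).congr_deriv ?_
    simp only [Z]
    field_simp
  have taylor := integral_integral_eq_of_hasDerivAt hZ hZ' (by fun_prop) r
  simp only [intervalIntegral.integral_const_mul] at taylor
  rw [taylor]
  simp [Z]

lemma const_mul_integral_integral_sq_pow_div_factorial (C K : ℝ) (n : ℕ) (r : ℝ) :
    K * ∫ s in 0..r, ∫ t in 0..s, C * (K * t ^ 2) ^ n / (2 * n)! =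
      C * (K * r ^ 2) ^ (n + 1) / (2 * (n + 1))! := by
  have hpow (t : ℝ) : C * (K * t ^ 2) ^ n / (2 * n)! = C * K ^ n / (2 * n)! * t ^ (2 * n) := by
    rw [mul_pow, ← pow_mul]; ring
  have hfact : ((2 * (n + 1))! : ℝ) = (2 * n + 1) * (2 * n + 2) * (2 * n)! := by
    rw [show 2 * (n + 1) = 2 * n + 1 + 1 by ring, Nat.factorial_succ, Nat.factorial_succ]
    push_cast; ring
  simp only [hpow, intervalIntegral.integral_const_mul, integral_integral_pow, hfact]
  push_cast
  field_simp
  ring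

lemma tendsto_mul_sq_pow_div_factorial (C : ℝ) {K : ℝ} (hK : 0 ≤ K) (r : ℝ) :
    Tendsto (fun n : ℕ => C * (K * r ^ 2) ^ n / (2 * n)!) atTop (𝓝 0) := by
  have hsq : K * r ^ 2 = (√K * r) ^ 2 := by rw [mul_pow, sq_sqrt hK]
  have h := ((FloorSemiring.tendsto_pow_div_factorial_atTop (√K * r)).comp
    (tendsto_id.const_mul_atTop' two_pos)).const_mul C
  simpa only [hsq, ← pow_mul, mul_div_assoc, mul_zero, Function.comp_def, id] using h

theorem nonneg_of_const_mul_integral_integral_le {K R r : ℝ} {W : ℝ → ℝ} (hK : 0 ≤ K)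
    (hW : ContinuousOn W (Icc 0 R))
    (h : ∀ r ∈ Icc 0 R, K * ∫ s in 0..r, ∫ t in 0..s, W t ≤ W r) (hr : r ∈ Icc 0 R) :
    0 ≤ W r := by
  obtain ⟨C, hC⟩ := isCompact_Icc.exists_bound_of_continuousOn hW
  have iterate (n : ℕ) : ∀ r ∈ Icc 0 R, -C * (K * r ^ 2) ^ n / (2 * n)! ≤ W r := by
    induction n with
    | zero =>
      intro r hr
      simpa using neg_le_of_abs_le (hC r hr)
    | succ n ih =>
      intro r hr
      rw [← const_mul_integral_integral_sq_pow_div_factorial]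
      calc K * ∫ s in 0..r, ∫ t in 0..s, -C * (K * t ^ 2) ^ n / (2 * n)!
          ≤ K * ∫ s in 0..r, ∫ t in 0..s, W t :=
            mul_le_mul_of_nonneg_left (integral_integral_mono_on hr.1 (by fun_prop)
              (hW.mono (Icc_subset_Icc_right hr.2)) fun t ht => ih t ⟨ht.1, ht.2.trans hr.2⟩) hK
        _ ≤ W r := h r hr
  exact le_of_tendsto' (tendsto_mul_sq_pow_div_factorial (-C) hK r) fun n => iterate n r hr

theorem gronwall_comparison_general (K : ℝ) (hK : 0 < K) (A B R : ℝ)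
    (L : ℝ → ℝ) (hL : ContinuousOn L (Set.Icc 0 R))
    (hineq : ∀ r ∈ Set.Icc (0 : ℝ) R,
      A - B * r + K * ∫ s in (0 : ℝ)..r, ∫ t in (0 : ℝ)..s, L t ≤ L r) :
    ∀ r ∈ Set.Icc (0 : ℝ) R,
      A * Real.cosh (Real.sqrt K * r) -
          (B / Real.sqrt K) * Real.sinh (Real.sqrt K * r) ≤ L r := by
  set Z : ℝ → ℝ := fun t => A * cosh (√K * t) - B / √K * sinh (√K * t)
  have hZ_cont : Continuous Z := by fun_prop
  have hZ (r : ℝ) : A - B * r + K * ∫ s in 0..r, ∫ t in 0..s, Z t = Z r := by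
    have h := cosh_sub_sinh_eq_integral_integral (sqrt_pos.2 hK).ne' A B r
    rw [sq_sqrt hK.le] at h
    exact h.symm
  have hW : ∀ r ∈ Icc 0 R, K * ∫ s in 0..r, ∫ t in 0..s, (L t - Z t) ≤ L r - Z r := by
    intro r hr
    rw [integral_integral_sub hr.1 (hL.mono (Icc_subset_Icc_right hr.2)) hZ_cont.continuousOn,
      mul_sub]
    linarith [hineq r hr, hZ r]
  exact fun r hr => sub_nonneg.1 <|
    nonneg_of_const_mul_integral_integral_le (W := L - Z) hK.le (hL.sub hZ_cont.continuousOn) hW hr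

theorem gronwall_comparison (K : ℝ) (hK : 0 < K) (A B R : ℝ) (hR : 0 < R)
    (L : ℝ → ℝ) (hL : ContinuousOn L (Set.Icc 0 R))
    (hineq : ∀ r ∈ Set.Icc (0 : ℝ) R,
      A - B * r + K * ∫ s in (0 : ℝ)..r, ∫ t in (0 : ℝ)..s, L t ≤ L r) :
    ∀ r ∈ Set.Icc (0 : ℝ) R,
      A * Real.cosh (Real.sqrt K * r) -
          (B / Real.sqrt K) * Real.sinh (Real.sqrt K * r) ≤ L r :=
  gronwall_comparison_general K hK A B R L hL hineq
end
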